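/- arXiv:1106.1258 — 5 statements merged into one kernel-verified Lean document; each statement's English description precedes it below -/
import Mathlib

section
/- Let k ≥ 3 be an integer and let c be any edge coloring of G_k. If i ≠ j are indices with 1 ≤ i, j ≤ k such that c(u v_i) = c(u v_j) and c(v_i w_i) = c(v_j w_j), then every rainbow path in G_k from v_i to v_j has at least 5 edges (and hence uses at least 5 distinct colors). -/
/-! A path from `v_i` leaves through `u` or `w_i` and arrives through `u` or `w_j`. Since
`c(u v_i) = c(u v_j)` and `c(v_i w_i) = c(v_j w_j)`, a rainbow path cannot do both through `u`
or both through `w`, so up to reversal it leaves through `u` and arrives through `w_j`. After `u`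
it visits some `v_m` with `m ≠ j`, then necessarily `w_m`, which is not adjacent to `v_j`: at
least five edges. -/

/-- Vertex type of the graph `G_k`: the hub `u`, the vertices `v_1,…,v_k`
and the vertices `w_1,…,w_k` (all `2k+1` vertices distinct). -/
abbrev Vk (k : ℕ) : Type := Unit ⊕ Fin k ⊕ Fin k

/-- The hub vertex `u` of `G_k`. -/
def uVtx (k : ℕ) : Vk k := Sum.inl ()

/-- The vertex `v_i` of `G_k`. -/
def vVtx {k : ℕ} (i : Fin k) : Vk k := Sum.inr (Sum.inl i)

/-- The vertex `w_i` of `G_k`. -/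
def wVtx {k : ℕ} (i : Fin k) : Vk k := Sum.inr (Sum.inr i)

/-- The generating relation for the edges of `G_k`: `u ∼ v_i`, `v_i ∼ w_i` and
`w_i ∼ w_j` (the requirement `i ≠ j` is taken care of by `SimpleGraph.fromRel`,
which discards loops). -/
def GkRel (k : ℕ) : Vk k → Vk k → Prop
  | Sum.inl _, Sum.inr (Sum.inl _) => True
  | Sum.inr (Sum.inl i), Sum.inr (Sum.inr j) => i = j
  | Sum.inr (Sum.inr _), Sum.inr (Sum.inr _) => True
  | _, _ => False

/-- The graph `G_k`: `u` joined to each `v_i`, `v_i` joined to `w_i`, and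
`{w_1,…,w_k}` forming a clique. -/
def Gk (k : ℕ) : SimpleGraph (Vk k) := SimpleGraph.fromRel (GkRel k)

/-- A graph `G` with an edge coloring `c` is *rainbow connected* if every pair of distinct
vertices is joined by a path whose edges all receive distinct colors. -/
def RainbowConnected {α β : Type*} (G : SimpleGraph α) (c : Sym2 α → β) : Prop :=
  ∀ x y : α, x ≠ y → ∃ p : G.Walk x y, p.IsPath ∧ (p.edges.map c).Nodup

namespace SimpleGraph.Walk

variable {V : Type*} {G : SimpleGraph V}

lemma two_le_length_of_not_adj {u v : V} (p : G.Walk u v) (hne : u ≠ v) (hadj : ¬G.Adj u v) :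
    2 ≤ p.length := by
  have h0 : p.length ≠ 0 := fun h ↦ hne (eq_of_length_eq_zero h)
  have h1 : p.length ≠ 1 := fun h ↦ hadj (adj_of_length_eq_one h)
  omega

lemma penultimate_eq_snd_of_length_eq_two {u v : V} {p : G.Walk u v} (h : p.length = 2) :
    p.penultimate = p.snd := by
  rw [penultimate, h]

lemma mk_start_snd_eq_mk_penultimate_end_of_nodup {β : Type*} {c : Sym2 V → β} {u v : V}
    {p : G.Walk u v} (hnil : ¬p.Nil) (hc : (p.edges.map c).Nodup)
    (h : c s(u, p.snd) = c s(p.penultimate, v)) : s(u, p.snd) = s(p.penultimate, v) :=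
  List.inj_on_of_nodup_map hc (p.mk_start_snd_mem_edges hnil)
    (p.mk_penultimate_end_mem_edges hnil) h

end SimpleGraph.Walk

namespace Gk

open SimpleGraph

variable {k : ℕ}

lemma vVtx_injective : Function.Injective (vVtx : Fin k → Vk k) := by
  intro i j h
  simpa [vVtx] using h

lemma eq_vVtx_of_adj_uVtx {x : Vk k} (h : (Gk k).Adj (uVtx k) x) : ∃ m, x = vVtx m := by
  rcases x with _ | m | m <;> simp_all [Gk, GkRel, uVtx, vVtx]

lemma eq_uVtx_or_eq_wVtx_of_adj {i : Fin k} {x : Vk k} (h : (Gk k).Adj (vVtx i) x) :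
    x = uVtx k ∨ x = wVtx i := by
  rcases x with _ | m | m <;> simp_all [Gk, GkRel, uVtx, vVtx, wVtx]

lemma not_adj_wVtx_vVtx {m j : Fin k} (h : m ≠ j) : ¬(Gk k).Adj (wVtx m) (vVtx j) := by
  simp [Gk, GkRel, vVtx, wVtx, Ne.symm h]

lemma three_le_length_of_uVtx_notMem_support {m j : Fin k} (r : (Gk k).Walk (vVtx m) (vVtx j))
    (hmj : m ≠ j) (hu : uVtx k ∉ r.support) : 3 ≤ r.length := by
  cases r with
  | nil => exact absurd rfl hmj
  | cons h r =>
    obtain rfl | rfl := eq_uVtx_or_eq_wVtx_of_adj h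
    · exact absurd (by simp) hu
    · have := r.two_le_length_of_not_adj (by simp [wVtx, vVtx]) (not_adj_wVtx_vVtx hmj)
      simp only [Walk.length_cons]
      omega

lemma length_eq_one_or_four_le_of_isPath_uVtx {j : Fin k} {q : (Gk k).Walk (uVtx k) (vVtx j)}
    (hq : q.IsPath) : q.length = 1 ∨ 4 ≤ q.length := by
  cases q with
  | cons h r =>
    obtain ⟨m, rfl⟩ := eq_vVtx_of_adj_uVtx h
    rw [Walk.cons_isPath_iff] at hq
    by_cases hmj : m = j
    · subst hmj
      simp [Walk.isPath_iff_nil.1 hq.1]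
    · have := three_le_length_of_uVtx_notMem_support r hmj hq.2
      simp only [Walk.length_cons]
      omega

lemma length_eq_two_or_five_le_of_snd_eq_uVtx {i j : Fin k}
    {p : (Gk k).Walk (vVtx i) (vVtx j)} (hp : p.IsPath) (hsnd : p.snd = uVtx k) :
    p.length = 2 ∨ 5 ≤ p.length := by
  cases p with
  | nil => simp [uVtx, vVtx] at hsnd
  | cons h q =>
    rw [Walk.snd_cons] at hsnd
    subst hsnd
    have := length_eq_one_or_four_le_of_isPath_uVtx ((Walk.cons_isPath_iff h q).1 hp).1
    simp only [Walk.length_cons]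
    omega

lemma five_le_length_of_snd_eq_uVtx {β : Type*} {c : Sym2 (Vk k) → β} {i j : Fin k}
    (hij : i ≠ j) (h1 : c s(uVtx k, vVtx i) = c s(uVtx k, vVtx j))
    {p : (Gk k).Walk (vVtx i) (vVtx j)} (hp : p.IsPath) (hc : (p.edges.map c).Nodup)
    (hsnd : p.snd = uVtx k) : 5 ≤ p.length := by
  obtain hlen | hlen := length_eq_two_or_five_le_of_snd_eq_uVtx hp hsnd
  · have hnil : ¬p.Nil := Walk.not_nil_of_ne (vVtx_injective.ne hij)
    have hpen : p.penultimate = uVtx k := hsnd ▸ Walk.penultimate_eq_snd_of_length_eq_two hlen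
    have hends := Walk.mk_start_snd_eq_mk_penultimate_end_of_nodup hnil hc
      (by rw [hsnd, hpen, Sym2.eq_swap, h1])
    rw [hsnd, hpen] at hends
    simp [vVtx, uVtx, hij] at hends
  · exact hlen

end Gk

open SimpleGraph Gk in
theorem rainbow_path_length_ge_five_general {k : ℕ} (c : Sym2 (Vk k) → ℕ)
    (i j : Fin k) (hij : i ≠ j)
    (h1 : c s(uVtx k, vVtx i) = c s(uVtx k, vVtx j))
    (h2 : c s(vVtx i, wVtx i) = c s(vVtx j, wVtx j)) :
    ∀ p : (Gk k).Walk (vVtx i) (vVtx j), p.IsPath → (p.edges.map c).Nodup →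
      5 ≤ p.length ∧ 5 ≤ (p.edges.map c).toFinset.card := by
  intro p hp hc
  have hnil : ¬p.Nil := Walk.not_nil_of_ne (vVtx_injective.ne hij)
  have hlen : 5 ≤ p.length := by
    obtain hsnd | hsnd := eq_uVtx_or_eq_wVtx_of_adj (p.adj_snd hnil)
    · exact five_le_length_of_snd_eq_uVtx hij h1 hp hc hsnd
    obtain hpen | hpen := eq_uVtx_or_eq_wVtx_of_adj (p.adj_penultimate hnil).symm
    · have hc' : (p.reverse.edges.map c).Nodup := by simpa [Walk.edges_reverse] using hc
      simpa using five_le_length_of_snd_eq_uVtx hij.symm h1.symm hp.reverse hc'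
        (by rw [Walk.snd_reverse, hpen])
    · have hends := Walk.mk_start_snd_eq_mk_penultimate_end_of_nodup hnil hc
        (by rw [hsnd, hpen, Sym2.eq_swap (a := wVtx j), h2])
      rw [hsnd, hpen] at hends
      simp [vVtx, wVtx, hij] at hends
  refine ⟨hlen, ?_⟩
  rwa [List.toFinset_card_of_nodup hc, List.length_map, Walk.length_edges]

/-- Let `k ≥ 3` and let `c` be any edge coloring of `G_k`. If `i ≠ j` are such that
`c(u v_i) = c(u v_j)` and `c(v_i w_i) = c(v_j w_j)`, then every rainbow path in `G_k`
from `v_i` to `v_j` has at least 5 edges (and hence uses at least 5 distinct colors). -/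
theorem rainbow_path_length_ge_five {k : ℕ} (hk : 3 ≤ k) (c : Sym2 (Vk k) → ℕ)
    (i j : Fin k) (hij : i ≠ j)
    (h1 : c s(uVtx k, vVtx i) = c s(uVtx k, vVtx j))
    (h2 : c s(vVtx i, wVtx i) = c s(vVtx j, wVtx j)) :
    ∀ p : (Gk k).Walk (vVtx i) (vVtx j), p.IsPath → (p.edges.map c).Nodup →
      5 ≤ p.length ∧ 5 ≤ (p.edges.map c).toFinset.card :=
  rainbow_path_length_ge_five_general c i j hij h1 h2
end

section
/- For every integer k ≥ 17, no edge coloring of G_k using at most 4 colors makes G_k rainbow connected; that is, rc(G_k) ≥ 5. -/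
/-!
Colour each index `i` by the pair of colours of `u v_i` and `v_i w_i`. With four colours there
are only `16` such pairs, so for `k ≥ 17` two indices `i ≠ j` share one. A rainbow path from
`v_i` to `v_j` has at most four edges; it must use an edge at `v_i` and one at `v_j`, and if these
are `u v_i, u v_j` or `v_i w_i, v_j w_j` they repeat a colour. Otherwise, say the path avoids
`u v_j` and `v_i w_i`; then it has to run `v_i, u, v_l, w_l, …, w_j, v_j`, at least five edges,
as a potential that grows by at most one per edge shows.
-/

namespace SimpleGraph.Walk

variable {V : Type*} {G : SimpleGraph V}

theorem le_add_length_of_forall_darts (f : V → ℕ) {a b : V} (p : G.Walk a b)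
    (hf : ∀ d ∈ p.darts, f d.snd ≤ f d.fst + 1) : f b ≤ f a + p.length := by
  induction p with
  | nil => simp
  | cons h q ih =>
    have hstep := hf _ List.mem_cons_self
    have := ih fun d hd => hf d (List.mem_cons_of_mem _ hd)
    simp only [length_cons] at *
    omega

theorem length_le_card_of_nodup_map_edges {β : Type*} [Fintype β] (c : Sym2 V → β)
    {a b : V} (p : G.Walk a b) (h : (p.edges.map c).Nodup) : p.length ≤ Fintype.card β := by
  simpa using h.length_le_card

end SimpleGraph.Walk

open SimpleGraph

lemma Gk_adj_vVtx {k : ℕ} {i : Fin k} {x : Vk k} (h : (Gk k).Adj (vVtx i) x) :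
    x = uVtx k ∨ x = wVtx i := by
  rcases x with _ | x | x <;> simp_all [Gk, GkRel, vVtx, wVtx, uVtx, eq_comm]

lemma Gk_mem_edges_of_walk_from_vVtx {k : ℕ} {i : Fin k} {y : Vk k}
    (p : (Gk k).Walk (vVtx i) y) (hy : vVtx i ≠ y) :
    s(uVtx k, vVtx i) ∈ p.edges ∨ s(vVtx i, wVtx i) ∈ p.edges := by
  have hp := p.mk_start_snd_mem_edges (Walk.not_nil_of_ne hy)
  rcases Gk_adj_vVtx (p.adj_snd (Walk.not_nil_of_ne hy)) with h | h <;> rw [h] at hp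
  · exact Or.inl (Sym2.eq_swap ▸ hp)
  · exact Or.inr hp

/-- Along the shortest route `v_i, u, v_l, w_l, w_j, v_j` avoiding `u v_j` and `v_i w_i` it takes
the values `0, …, 5`. -/
def crossPotential {k : ℕ} (i j : Fin k) : Vk k → ℕ
  | Sum.inl _ => 1
  | Sum.inr (Sum.inl l) => if l = i then 0 else if l = j then 5 else 2
  | Sum.inr (Sum.inr l) => if l = j then 4 else 3

lemma crossPotential_le_succ {k : ℕ} {i j : Fin k} {x y : Vk k}
    (hxy : (Gk k).Adj x y) (hu : s(x, y) ≠ s(uVtx k, vVtx j))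
    (hw : s(x, y) ≠ s(vVtx i, wVtx i)) :
    crossPotential i j y ≤ crossPotential i j x + 1 := by
  rcases x with _ | x | x <;> rcases y with _ | y | y <;>
    simp_all [Gk, GkRel, crossPotential, uVtx, vVtx, wVtx] <;> split_ifs <;> simp_all

lemma Gk_five_le_length_of_not_mem_edges {k : ℕ} {i j : Fin k} (hij : i ≠ j)
    (p : (Gk k).Walk (vVtx i) (vVtx j)) (hu : s(uVtx k, vVtx j) ∉ p.edges)
    (hw : s(vVtx i, wVtx i) ∉ p.edges) : 5 ≤ p.length := by
  have := p.le_add_length_of_forall_darts (crossPotential i j) fun d hd =>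
    have hd : d.edge ∈ p.edges := List.mem_map_of_mem hd
    crossPotential_le_succ d.adj (ne_of_mem_of_not_mem hd hu) (ne_of_mem_of_not_mem hd hw)
  simpa [crossPotential, vVtx, hij, hij.symm] using this

lemma Gk_mem_edges_of_length_le_four {k : ℕ} {i j : Fin k} (hij : i ≠ j)
    (p : (Gk k).Walk (vVtx i) (vVtx j)) (hp : p.length ≤ 4) :
    (s(uVtx k, vVtx i) ∈ p.edges ∧ s(uVtx k, vVtx j) ∈ p.edges) ∨
      (s(vVtx i, wVtx i) ∈ p.edges ∧ s(vVtx j, wVtx j) ∈ p.edges) := by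
  have hne : vVtx i ≠ vVtx j := by simpa [vVtx] using hij
  have hstart := Gk_mem_edges_of_walk_from_vVtx p hne
  have hend := Gk_mem_edges_of_walk_from_vVtx p.reverse hne.symm
  rw [Walk.edges_reverse, List.mem_reverse, List.mem_reverse] at hend
  have hcross := fun hu hw =>
    (Gk_five_le_length_of_not_mem_edges hij p hu hw).not_gt (by omega)
  have hcross' := fun hu hw =>
    (Gk_five_le_length_of_not_mem_edges hij.symm p.reverse hu hw).not_gt
      (by rw [Walk.length_reverse]; omega)
  simp only [Walk.edges_reverse, List.mem_reverse] at hcross'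
  tauto

/-- For every integer `k ≥ 17`, no edge coloring of `G_k` using at most 4 colors makes
`G_k` rainbow connected; that is, `rc(G_k) ≥ 5`. -/
theorem Gk_not_rainbow_connected_with_four_colors (k : ℕ) (hk : 17 ≤ k) :
    ∀ c : Sym2 (Vk k) → Fin 4, ¬ RainbowConnected (Gk k) c := by
  intro c hc
  obtain ⟨i, j, hij, hcij⟩ := Fintype.exists_ne_map_eq_of_card_lt
    (fun i : Fin k => (c s(uVtx k, vVtx i), c s(vVtx i, wVtx i))) (by simp; omega)
  have hne : vVtx i ≠ vVtx j := by simpa [vVtx] using hij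
  obtain ⟨p, -, hrainbow⟩ := hc (vVtx i) (vVtx j) hne
  have hinj := List.inj_on_of_nodup_map hrainbow
  rcases Gk_mem_edges_of_length_le_four hij p
    (by simpa using p.length_le_card_of_nodup_map_edges c hrainbow) with ⟨hi, hj⟩ | ⟨hi, hj⟩
  · exact hne (Sym2.congr_right.mp (hinj hi hj (congrArg Prod.fst hcij)))
  · exact hij (by simpa [vVtx, wVtx] using hinj hi hj (congrArg Prod.snd hcij))
end

section
/- For every integer k ≥ 2, the edge coloring of G_k with 5 colors defined by c(u v_1) = 1, c(v_1 w_1) = 2, c(u v_i) = 3 and c(v_i w_i) = 4 for all 2 ≤ i ≤ k, and c(w_i w_j) = 5 for all 1 ≤ i < j ≤ k, makes G_k rainbow connected; in particular rc(G_k) ≤ 5. -/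
def RainbowJoined {α β : Type*} (G : SimpleGraph α) (c : Sym2 α → β) (x y : α) : Prop :=
  ∃ p : G.Walk x y, (p.edges.map c).Nodup

section RainbowJoined

variable {α β : Type*} {G : SimpleGraph α} {c : Sym2 α → β} {x y : α}

theorem RainbowJoined.symm (h : RainbowJoined G c x y) : RainbowJoined G c y x := by
  obtain ⟨p, hp⟩ := h
  exact ⟨p.reverse, by simpa [List.map_reverse] using hp⟩

theorem RainbowJoined.of_adj (h : G.Adj x y) : RainbowJoined G c x y :=
  ⟨.cons h .nil, by simp⟩

theorem RainbowJoined.of_edges_map_eq {ι : Type*} {a : ι → β} (ha : Function.Injective a)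
    {l : List ι} (hl : l.Nodup) (p : G.Walk x y) (hp : p.edges.map c = l.map a) :
    RainbowJoined G c x y :=
  ⟨p, hp ▸ hl.map ha⟩

theorem RainbowConnected.of_rainbowJoined (h : ∀ x y, x ≠ y → RainbowJoined G c x y) :
    RainbowConnected G c := by
  classical
  intro x y hxy
  obtain ⟨p, hp⟩ := h x y hxy
  exact ⟨p.bypass, p.bypass_isPath, hp.sublist (p.edges_bypass_sublist_edges.map c)⟩

end RainbowJoined

section Gk

variable {k : ℕ}

theorem Gk_adj_u_v (i : Fin k) : (Gk k).Adj (uVtx k) (vVtx i) := by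
  simp [Gk, uVtx, vVtx, GkRel]

theorem Gk_adj_v_w (i : Fin k) : (Gk k).Adj (vVtx i) (wVtx i) := by
  simp [Gk, vVtx, wVtx, GkRel]

theorem Gk_adj_w_w {i j : Fin k} (h : i ≠ j) : (Gk k).Adj (wVtx i) (wVtx j) := by
  simp [Gk, wVtx, GkRel, h]

/-- The colouring of the theorem, with `v_z` in the role of `v_1` and colours `a 0, …, a 4` in
the roles of `1, …, 5`. -/
structure IsGkColoring {β : Type*} (z : Fin k) (c : Sym2 (Vk k) → β) (a : Fin 5 → β) :
    Prop where
  u_v_self : c s(uVtx k, vVtx z) = a 0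
  v_w_self : c s(vVtx z, wVtx z) = a 1
  u_v : ∀ i, i ≠ z → c s(uVtx k, vVtx i) = a 2
  v_w : ∀ i, i ≠ z → c s(vVtx i, wVtx i) = a 3
  w_w : ∀ i j, i ≠ j → c s(wVtx i, wVtx j) = a 4

namespace IsGkColoring

variable {β : Type*} {z : Fin k} {c : Sym2 (Vk k) → β} {a : Fin 5 → β}
  (hc : IsGkColoring z c a) (ha : Function.Injective a)
include hc ha

theorem rainbowJoined_u_w (i : Fin k) : RainbowJoined (Gk k) c (uVtx k) (wVtx i) := by
  let p : (Gk k).Walk (uVtx k) (wVtx i) := .cons (Gk_adj_u_v i) (.cons (Gk_adj_v_w i) .nil)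
  rcases eq_or_ne i z with rfl | hi
  · exact .of_edges_map_eq ha (l := [0, 1]) (by decide) p
      (by simp [p, hc.u_v_self, hc.v_w_self])
  · exact .of_edges_map_eq ha (l := [2, 3]) (by decide) p
      (by simp [p, hc.u_v i hi, hc.v_w i hi])

theorem rainbowJoined_v_w (i j : Fin k) : RainbowJoined (Gk k) c (vVtx i) (wVtx j) := by
  rcases eq_or_ne i j with rfl | hij
  · exact .of_adj (Gk_adj_v_w i)
  let p : (Gk k).Walk (vVtx i) (wVtx j) := .cons (Gk_adj_v_w i) (.cons (Gk_adj_w_w hij) .nil)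
  rcases eq_or_ne i z with rfl | hi
  · exact .of_edges_map_eq ha (l := [1, 4]) (by decide) p
      (by simp [p, hc.v_w_self, hc.w_w _ _ hij])
  · exact .of_edges_map_eq ha (l := [3, 4]) (by decide) p
      (by simp [p, hc.v_w i hi, hc.w_w _ _ hij])

theorem rainbowJoined_v_v {i j : Fin k} (hij : i ≠ j) :
    RainbowJoined (Gk k) c (vVtx i) (vVtx j) := by
  wlog hj : j ≠ z generalizing i j
  · obtain rfl := not_not.mp hj
    exact (this hij.symm hij).symm
  rcases eq_or_ne i z with rfl | hi
  · exact .of_edges_map_eq ha (l := [0, 2]) (by decide)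
      (.cons (Gk_adj_u_v i).symm (.cons (Gk_adj_u_v j) .nil))
      (by simp [Sym2.eq_swap (b := uVtx k), hc.u_v_self, hc.u_v j hj])
  -- neither end is `v_z`, so the path detours through the edges `u v_z w_z` of colours `a 0, a 1`
  · exact .of_edges_map_eq ha (l := [2, 0, 1, 4, 3]) (by decide)
      (.cons (Gk_adj_u_v i).symm <| .cons (Gk_adj_u_v z) <| .cons (Gk_adj_v_w z) <|
        .cons (Gk_adj_w_w hj.symm) <| .cons (Gk_adj_v_w j).symm .nil)
      (by simp [Sym2.eq_swap (b := uVtx k), Sym2.eq_swap (a := wVtx j), hc.u_v_self,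
        hc.v_w_self, hc.u_v i hi, hc.v_w j hj, hc.w_w z j hj.symm])

theorem rainbowConnected : RainbowConnected (Gk k) c := by
  refine .of_rainbowJoined ?_
  rintro (⟨⟩ | i | i) (⟨⟩ | j | j) hxy
  · exact absurd rfl hxy
  · exact .of_adj (Gk_adj_u_v j)
  · exact hc.rainbowJoined_u_w ha j
  · exact .of_adj (Gk_adj_u_v i).symm
  · exact hc.rainbowJoined_v_v ha (by rintro rfl; exact hxy rfl)
  · exact hc.rainbowJoined_v_w ha i j
  · exact (hc.rainbowJoined_u_w ha i).symm
  · exact (hc.rainbowJoined_v_w ha j i).symm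
  · exact .of_adj (Gk_adj_w_w (by rintro rfl; exact hxy rfl))

end IsGkColoring

def gkColoringAux (z : Fin k) : Vk k → Vk k → Fin 5
  | Sum.inl _, Sum.inr (Sum.inl i) | Sum.inr (Sum.inl i), Sum.inl _ => if i = z then 0 else 2
  | Sum.inr (Sum.inl i), Sum.inr (Sum.inr _) | Sum.inr (Sum.inr _), Sum.inr (Sum.inl i) =>
      if i = z then 1 else 3
  | Sum.inr (Sum.inr _), Sum.inr (Sum.inr _) => 4
  | _, _ => 0

def gkColoring (z : Fin k) : Sym2 (Vk k) → Fin 5 :=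
  Sym2.lift ⟨gkColoringAux z, by rintro (_ | _ | _) (_ | _ | _) <;> rfl⟩

theorem isGkColoring_gkColoring (z : Fin k) : IsGkColoring z (gkColoring z) id where
  u_v_self := by simp [gkColoring, gkColoringAux, uVtx, vVtx]
  v_w_self := by simp [gkColoring, gkColoringAux, vVtx, wVtx]
  u_v i hi := by simp [gkColoring, gkColoringAux, uVtx, vVtx, hi]
  v_w i hi := by simp [gkColoring, gkColoringAux, vVtx, wVtx, hi]
  w_w i j _ := by simp [gkColoring, gkColoringAux, wVtx]

end Gk

/-- For every `k ≥ 2`, the edge coloring of `G_k` with 5 colors given by `c(u v_1) = 1`,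
`c(v_1 w_1) = 2`, `c(u v_i) = 3` and `c(v_i w_i) = 4` for `i ≠ 1`, and `c(w_i w_j) = 5`,
makes `G_k` rainbow connected; in particular `rc(G_k) ≤ 5`. -/
theorem Gk_rainbow_connected_with_five_colors (k : ℕ) (hk : 2 ≤ k) :
    (∀ c : Sym2 (Vk k) → ℕ,
      c s(uVtx k, vVtx (⟨0, by omega⟩ : Fin k)) = 1 →
      c s(vVtx (⟨0, by omega⟩ : Fin k), wVtx (⟨0, by omega⟩ : Fin k)) = 2 →
      (∀ i : Fin k, i ≠ (⟨0, by omega⟩ : Fin k) → c s(uVtx k, vVtx i) = 3) →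
      (∀ i : Fin k, i ≠ (⟨0, by omega⟩ : Fin k) → c s(vVtx i, wVtx i) = 4) →
      (∀ i j : Fin k, i ≠ j → c s(wVtx i, wVtx j) = 5) →
      RainbowConnected (Gk k) c) ∧
    ∃ c : Sym2 (Vk k) → Fin 5, RainbowConnected (Gk k) c := by
  refine ⟨fun c h₁ h₂ h₃ h₄ h₅ => ?_, gkColoring ⟨0, by omega⟩, ?_⟩
  · exact IsGkColoring.rainbowConnected (a := ![1, 2, 3, 4, 5]) ⟨h₁, h₂, h₃, h₄, h₅⟩ (by decide)
  · exact (isGkColoring_gkColoring _).rainbowConnected Function.injective_id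
end

section
/- There exists a connected bridgeless simple graph G of diameter 2 with rc(G) = 5; hence the upper bound rc(G) ≤ 5 for connected bridgeless graphs of diameter 2 is sharp. -/
namespace SimpleGraph

variable {V β : Type*} {G : SimpleGraph V} {c : Sym2 V → β} {x y z w : V}

def RainbowJoined (G : SimpleGraph V) (c : Sym2 V → β) (x y : V) : Prop :=
  ∃ p : G.Walk x y, p.IsPath ∧ (p.edges.map c).Nodup

lemma RainbowJoined.symm (h : G.RainbowJoined c x y) : G.RainbowJoined c y x := by
  obtain ⟨p, hp, hc⟩ := h
  exact ⟨p.reverse, hp.reverse, by simpa [Walk.edges_reverse] using hc⟩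

lemma Adj.rainbowJoined (h : G.Adj x y) : G.RainbowJoined c x y :=
  ⟨.cons h .nil, by simpa using h.ne, by simp⟩

lemma rainbowJoined_of_adj_adj (hxy : G.Adj x y) (hyz : G.Adj y z) (hxz : x ≠ z)
    (hc : c s(x, y) ≠ c s(y, z)) : G.RainbowJoined c x z :=
  ⟨.cons hxy (.cons hyz .nil), by simp [Walk.cons_isPath_iff, hxy.ne, hyz.ne, hxz],
    by simp [hc]⟩

lemma rainbowJoined_of_adj_adj_adj (hxy : G.Adj x y) (hyz : G.Adj y z) (hzw : G.Adj z w)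
    (hxz : x ≠ z) (hxw : x ≠ w) (hyw : y ≠ w) (hc₁ : c s(x, y) ≠ c s(y, z))
    (hc₂ : c s(x, y) ≠ c s(z, w)) (hc₃ : c s(y, z) ≠ c s(z, w)) : G.RainbowJoined c x w :=
  ⟨.cons hxy (.cons hyz (.cons hzw .nil)),
    by simp [Walk.cons_isPath_iff, hxy.ne, hyz.ne, hzw.ne, hxz, hxw, hyw],
    by simp [hc₁, hc₂, hc₃]⟩

lemma diam_eq_two_of_forall_exists_walk_length_le_two [Nontrivial V] (hG : G ≠ ⊤)
    (h : ∀ x y, ∃ p : G.Walk x y, p.length ≤ 2) : G.diam = 2 := by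
  have hle : G.ediam ≤ 2 := ediam_le_of_edist_le fun x y ↦ by
    obtain ⟨p, hp⟩ := h x y
    exact (edist_le p).trans (by exact_mod_cast hp)
  have h0 : G.ediam ≠ 0 := ediam_ne_zero
  have h1 : G.ediam ≠ 1 := mt ediam_eq_one.mp hG
  lift G.ediam to ℕ using ne_top_of_le_ne_top (by decide) hle with d hd
  rw [diam, ← hd, ENat.toNat_natCast]
  norm_cast at *
  omega

end SimpleGraph

inductive HubClique (ι : Type) : Type
  | hub : HubClique ι
  | spoke : ι → HubClique ι
  | rim : ι → HubClique ι
  deriving Fintype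

namespace HubClique

variable {ι : Type}

open SimpleGraph (Walk rainbowJoined_of_adj_adj rainbowJoined_of_adj_adj_adj)

def Adj : HubClique ι → HubClique ι → Prop
  | hub, spoke _ => True
  | spoke _, hub => True
  | spoke i, rim j => i = j
  | rim i, spoke j => i = j
  | rim i, rim j => i ≠ j
  | _, _ => False

variable (ι) in
def graph : SimpleGraph (HubClique ι) where
  Adj := Adj
  symm := ⟨fun x y ↦ by cases x <;> cases y <;> simp [Adj, eq_comm]⟩
  loopless := ⟨fun x ↦ by cases x <;> simp [Adj]⟩

@[simp] lemma graph_adj {x y : HubClique ι} : (graph ι).Adj x y ↔ Adj x y := Iff.rfl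

lemma adj_hub_spoke (i : ι) : (graph ι).Adj hub (spoke i) := trivial

lemma adj_spoke_rim (i : ι) : (graph ι).Adj (spoke i) (rim i) := rfl

lemma adj_rim_rim {i j : ι} (hij : i ≠ j) : (graph ι).Adj (rim i) (rim j) := hij

instance : Nonempty (HubClique ι) := ⟨hub⟩

lemma exists_walk_length_le_two (x y : HubClique ι) :
    ∃ p : (graph ι).Walk x y, p.length ≤ 2 := by
  have zero {x : HubClique ι} : ∃ p : (graph ι).Walk x x, p.length ≤ 2 := ⟨.nil, by simp⟩
  have one {x y : HubClique ι} (h : (graph ι).Adj x y) :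
      ∃ p : (graph ι).Walk x y, p.length ≤ 2 := ⟨.cons h .nil, by simp⟩
  have two {x y z : HubClique ι} (h₁ : (graph ι).Adj x y) (h₂ : (graph ι).Adj y z) :
      ∃ p : (graph ι).Walk x z, p.length ≤ 2 := ⟨.cons h₁ (.cons h₂ .nil), by simp⟩
  cases x with
  | hub => cases y with
    | hub => exact zero
    | spoke j => exact one (adj_hub_spoke j)
    | rim j => exact two (adj_hub_spoke j) (adj_spoke_rim j)
  | spoke i => cases y with
    | hub => exact one (adj_hub_spoke i).symm
    | spoke j => exact two (adj_hub_spoke i).symm (adj_hub_spoke j)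
    | rim j =>
      by_cases hij : i = j
      · exact hij ▸ one (adj_spoke_rim i)
      · exact two (adj_spoke_rim i) (adj_rim_rim hij)
  | rim i => cases y with
    | hub => exact two (adj_spoke_rim i).symm (adj_hub_spoke i).symm
    | spoke j =>
      by_cases hij : i = j
      · exact hij ▸ one (adj_spoke_rim i).symm
      · exact two (adj_rim_rim hij) (adj_spoke_rim j).symm
    | rim j =>
      by_cases hij : i = j
      · exact hij ▸ zero
      · exact one (adj_rim_rim hij)

lemma connected : (graph ι).Connected where
  preconnected x y := (exists_walk_length_le_two x y).elim fun p _ ↦ p.reachable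

lemma diam_eq_two [Nonempty ι] : (graph ι).diam = 2 := by
  obtain ⟨i⟩ := ‹Nonempty ι›
  have : Nontrivial (HubClique ι) := ⟨hub, rim i, by simp⟩
  refine SimpleGraph.diam_eq_two_of_forall_exists_walk_length_le_two (fun h ↦ ?_)
    exists_walk_length_le_two
  have : (graph ι).Adj hub (rim i) := by simp [h]
  simp [Adj] at this

def pentagon {i j : ι} (hij : i ≠ j) : (graph ι).Walk hub hub :=
  .cons (adj_hub_spoke i) <| .cons (adj_spoke_rim i) <| .cons (adj_rim_rim hij) <|
    .cons (adj_spoke_rim j).symm <| .cons (adj_hub_spoke j).symm .nil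

lemma pentagon_isCycle {i j : ι} (hij : i ≠ j) : (pentagon hij).IsCycle := by
  simp [pentagon, Walk.cons_isCycle_iff, Walk.cons_isPath_iff, hij]

lemma exists_pentagon_mem_edges [Nontrivial ι] {x y : HubClique ι} (h : (graph ι).Adj x y) :
    ∃ (i j : ι) (hij : i ≠ j), s(x, y) ∈ (pentagon hij).edges := by
  cases x <;> cases y <;> simp only [graph_adj, Adj] at h
  case hub.spoke i | spoke.hub i =>
    obtain ⟨j, hj⟩ := exists_ne i
    exact ⟨i, j, hj.symm, by simp [pentagon]⟩
  case spoke.rim i l | rim.spoke l i =>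
    subst l
    obtain ⟨j, hj⟩ := exists_ne i
    exact ⟨i, j, hj.symm, by simp [pentagon]⟩
  case rim.rim i j => exact ⟨i, j, h, by simp [pentagon]⟩

theorem not_isBridge [Nontrivial ι] (e : Sym2 (HubClique ι)) : ¬ (graph ι).IsBridge e := by
  obtain ⟨x, y⟩ := e
  intro hb
  obtain ⟨i, j, hij, he⟩ := exists_pentagon_mem_edges
    (hb.reachable_iff_adj.mp (connected.preconnected x y))
  exact hb.notMem_edges_of_isCycle (pentagon_isCycle hij) he

lemma mem_edges_of_walk_rim_spoke {l j : ι} (q : (graph ι).Walk (rim l) (spoke j))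
    (hq : q.length ≤ 2) : s(spoke j, rim j) ∈ q.edges := by
  rcases q with _ | @⟨_, v, _, h₁, _ | @⟨_, w, _, h₂, _ | ⟨_, _⟩⟩⟩
  · simpa [Adj, eq_comm] using h₁
  · cases v <;> simp [Adj, eq_comm] at h₁ h₂ ⊢
    exact h₂
  · simp at hq

lemma mem_edges_of_walk_hub_spoke {j : ι} (q : (graph ι).Walk hub (spoke j))
    (hq : q.length ≤ 3) : s(hub, spoke j) ∈ q.edges := by
  rcases q with
    _ | @⟨_, v, _, h₁, _ | @⟨_, w, _, h₂, _ | @⟨_, _, _, h₃, _ | ⟨_, _⟩⟩⟩⟩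
  · simp
  · cases v <;> simp [Adj] at h₁ h₂
  · cases v <;> cases w <;> simp [Adj] at h₁ h₂ h₃ ⊢
    simp_all
  · simp only [Walk.length_cons] at hq
    omega

lemma mem_edges_of_isPath_spoke_spoke {i j : ι} (hij : i ≠ j)
    (p : (graph ι).Walk (spoke i) (spoke j)) (hp : p.IsPath) (hlen : p.length ≤ 4) :
    (s(hub, spoke i) ∈ p.edges ∧ s(hub, spoke j) ∈ p.edges) ∨
      (s(spoke i, rim i) ∈ p.edges ∧ s(spoke j, rim j) ∈ p.edges) := by
  rcases p with _ | @⟨_, v, _, h₁, q⟩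
  · exact absurd rfl hij
  cases v with
  | hub =>
    have := mem_edges_of_walk_hub_spoke q (by simp only [Walk.length_cons] at hlen; omega)
    simp [this]
  | spoke => simp [Adj] at h₁
  | rim l =>
    have hl : i = l := h₁
    subst hl
    rcases q with _ | @⟨_, w, _, h₂, r⟩
    cases w with
    | hub => simp [Adj] at h₂
    | spoke m =>
      have hm : i = m := h₂
      subst hm
      simp [Walk.cons_isPath_iff] at hp
    | rim m =>
      have := mem_edges_of_walk_rim_spoke r (by simp only [Walk.length_cons] at hlen; omega)
      simp [this]

theorem not_rainbowConnected [Fintype ι] {β : Type*} [Fintype β] (hβ : Fintype.card β ≤ 4)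
    (hι : Fintype.card β * Fintype.card β < Fintype.card ι) (c : Sym2 (HubClique ι) → β) :
    ¬ RainbowConnected (graph ι) c := by
  intro h
  obtain ⟨i, j, hij, hcol⟩ := Fintype.exists_ne_map_eq_of_card_lt
    (fun i ↦ (c s(hub, spoke i), c s(spoke i, rim i))) (by simpa using hι)
  obtain ⟨p, hp, hc⟩ := h (spoke i) (spoke j) (by simpa using hij)
  have hlen : p.length ≤ 4 := by
    simpa using hc.length_le_card.trans hβ
  have hinj := List.inj_on_of_nodup_map hc
  rcases mem_edges_of_isPath_spoke_spoke hij p hp hlen with ⟨hi, hj⟩ | ⟨hi, hj⟩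
  · simpa [hij] using hinj hi hj (congrArg Prod.fst hcol)
  · simpa [hij] using hinj hi hj (congrArg Prod.snd hcol)

variable {β : Type*} (A B : ι → β) (κ : β)

-- `κ` colours the rim clique and, harmlessly, every non-edge.
def coloringFun : HubClique ι → HubClique ι → β
  | hub, spoke i | spoke i, hub => A i
  | spoke i, rim _ | rim _, spoke i => B i
  | _, _ => κ

def coloring : Sym2 (HubClique ι) → β :=
  Sym2.lift ⟨coloringFun A B κ, fun x y ↦ by cases x <;> cases y <;> rfl⟩

section
variable (i j : ι)
@[simp] lemma coloring_hub_spoke : coloring A B κ s(hub, spoke i) = A i := rfl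
@[simp] lemma coloring_spoke_hub : coloring A B κ s(spoke i, hub) = A i := rfl
@[simp] lemma coloring_spoke_rim : coloring A B κ s(spoke i, rim j) = B i := rfl
@[simp] lemma coloring_rim_spoke : coloring A B κ s(rim j, spoke i) = B i := rfl
@[simp] lemma coloring_rim_rim : coloring A B κ s(rim i, rim j) = κ := rfl
end

variable {A B κ}

lemma rainbowJoined_hub_rim (hB : ∀ i, B i ≠ κ) {i₀ : ι} (hi₀ : A i₀ ≠ B i₀)
    (hi₀κ : A i₀ ≠ κ) (i : ι) :
    (graph ι).RainbowJoined (coloring A B κ) hub (rim i) := by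
  by_cases h : A i = B i
  · have hi : i₀ ≠ i := fun h' ↦ hi₀ (h' ▸ h)
    exact rainbowJoined_of_adj_adj_adj (adj_hub_spoke i₀) (adj_spoke_rim i₀) (adj_rim_rim hi)
      (by simp) (by simp) (by simp) (by simpa) (by simpa) (by simpa using hB i₀)
  · exact rainbowJoined_of_adj_adj (adj_hub_spoke i) (adj_spoke_rim i) (by simp) (by simpa)

lemma rainbowJoined_spoke_spoke (hB : ∀ i, B i ≠ κ)
    (hAB : Function.Injective fun i ↦ (A i, B i)) {i j : ι} (hij : i ≠ j) :
    (graph ι).RainbowJoined (coloring A B κ) (spoke i) (spoke j) := by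
  by_cases h : A i = A j
  · have hBij : B i ≠ B j := fun h' ↦ hij (hAB (Prod.ext h h'))
    exact rainbowJoined_of_adj_adj_adj (adj_spoke_rim i) (adj_rim_rim hij)
      (adj_spoke_rim j).symm (by simp) (by simp [hij]) (by simp) (by simpa using hB i)
      (by simpa) (by simpa using (hB j).symm)
  · exact rainbowJoined_of_adj_adj (adj_hub_spoke i).symm (adj_hub_spoke j) (by simpa) (by simpa)

lemma rainbowJoined_spoke_rim (hB : ∀ i, B i ≠ κ) (i j : ι) :
    (graph ι).RainbowJoined (coloring A B κ) (spoke i) (rim j) := by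
  by_cases hij : i = j
  · exact hij ▸ (adj_spoke_rim i).rainbowJoined
  · exact rainbowJoined_of_adj_adj (adj_spoke_rim i) (adj_rim_rim hij) (by simp)
      (by simpa using hB i)

theorem rainbowConnected_coloring (hB : ∀ i, B i ≠ κ)
    (hAB : Function.Injective fun i ↦ (A i, B i))
    {i₀ : ι} (hi₀ : A i₀ ≠ B i₀) (hi₀κ : A i₀ ≠ κ) :
    RainbowConnected (graph ι) (coloring A B κ) := by
  intro x y hxy
  cases x <;> cases y
  case hub.hub => exact absurd rfl hxy
  case hub.spoke j => exact (adj_hub_spoke j).rainbowJoined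
  case hub.rim j => exact rainbowJoined_hub_rim hB hi₀ hi₀κ j
  case spoke.hub i => exact (adj_hub_spoke i).symm.rainbowJoined
  case spoke.spoke i j => exact rainbowJoined_spoke_spoke hB hAB (by simpa using hxy)
  case spoke.rim i j => exact rainbowJoined_spoke_rim hB i j
  case rim.hub i => exact (rainbowJoined_hub_rim hB hi₀ hi₀κ i).symm
  case rim.spoke i j => exact (rainbowJoined_spoke_rim hB j i).symm
  case rim.rim i j => exact (adj_rim_rim (by simpa using hxy)).rainbowJoined

end HubClique

/-- There exists a connected bridgeless finite simple graph of diameter 2 with `rc(G) = 5`: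
it is rainbow connectable with 5 colors but not with 4. Hence the upper bound `rc(G) ≤ 5`
for connected bridgeless graphs of diameter 2 is sharp. -/
theorem exists_diam_two_bridgeless_rc_eq_five :
    ∃ (α : Type) (_ : Fintype α) (G : SimpleGraph α),
      G.Connected ∧ (∀ e : Sym2 α, ¬ G.IsBridge e) ∧ G.diam = 2 ∧
      (∃ c : Sym2 α → Fin 5, RainbowConnected G c) ∧
      (∀ c : Sym2 α → Fin 4, ¬ RainbowConnected G c) := by
  refine ⟨HubClique (Fin 5 × Fin 4), inferInstance, HubClique.graph _, HubClique.connected,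
    HubClique.not_isBridge, HubClique.diam_eq_two,
    ⟨HubClique.coloring Prod.fst (fun i ↦ i.2.castSucc) (Fin.last 4), ?_⟩,
    HubClique.not_rainbowConnected (by simp) (by simp)⟩
  have hB (i : Fin 5 × Fin 4) : i.2.castSucc ≠ Fin.last 4 := (Fin.castSucc_lt_last i.2).ne
  have hAB : Function.Injective fun i : Fin 5 × Fin 4 ↦ (i.1, i.2.castSucc) :=
    Function.injective_id.prodMap (Fin.castSucc_injective 4)
  exact HubClique.rainbowConnected_coloring hB hAB (i₀ := (0, 1)) (by decide) (by decide)
end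

section
/- Let G be a connected bridgeless simple graph and let u be a vertex of G whose eccentricity is at most 2. Then every edge of G incident to u lies on a cycle of length at most 5. -/
/-!
Since `uv` is not a bridge, `v` is reachable from `u` in `G' = G - uv`, and a shortest such
path closes up with `uv` to a cycle; it remains to see that `G'.dist u v ≤ 4`. Suppose a shortest
`u`–`v` path `p` in `G'` is longer, and let `c` be its vertex at position `3`. A shortest `u`–`c`
path `s` in `G` has length at most `2`. If `s` avoids `uv`, it shortcuts the first three steps of
`p`; otherwise `s` starts with `uv` and its remainder, together with the first three steps of `p`,
gives a `u`–`v` walk in `G'` of length at most `4`.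
-/

namespace SimpleGraph

variable {V : Type*} {G : SimpleGraph V} {u v x : V}

/-- A path starting at `u` can only use the edge `s(u, v)` as its first edge. -/
lemma Walk.IsPath.exists_walk_deleteEdges {p : G.Walk u x} (hp : p.IsPath) :
    (∃ q : (G.deleteEdges {s(u, v)}).Walk u x, q.length = p.length) ∨
      ∃ q : (G.deleteEdges {s(u, v)}).Walk v x, q.length + 1 = p.length := by
  by_cases he : s(u, v) ∈ p.edges
  · right
    cases p with
    | nil => simp at he
    | cons hadj q =>
      rw [Walk.cons_isPath_iff] at hp
      rw [Walk.edges_cons, List.mem_cons] at he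
      rcases he with he | he
      · obtain rfl := Sym2.congr_right.mp he
        exact ⟨q.toDeleteEdge _ fun h ↦ hp.2 (q.fst_mem_support_of_mem_edges h), by simp⟩
      · exact absurd (q.fst_mem_support_of_mem_edges he) hp.2
  · exact .inl ⟨p.toDeleteEdge _ he, by simp⟩

lemma dist_deleteEdges_le_of_forall_dist_le {k : ℕ} (hecc : ∀ x, G.dist u x ≤ k)
    (hreach : (G.deleteEdges {s(u, v)}).Reachable u v) :
    (G.deleteEdges {s(u, v)}).dist u v ≤ 2 * k := by
  by_contra! hlong
  obtain ⟨p, hp⟩ := hreach.exists_walk_length_eq_dist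
  have hc : G.Reachable u (p.getVert (k + 1)) :=
    ((p.take (k + 1)).map (.ofLE (G.deleteEdges_le _))).reachable
  obtain ⟨s, hs, hslen⟩ := hc.exists_path_of_dist
  have hsk := hecc (p.getVert (k + 1))
  rcases hs.exists_walk_deleteEdges (v := v) with ⟨q, hq⟩ | ⟨q, hq⟩
  · have := (G.deleteEdges {s(u, v)}).dist_le (q.append (p.drop (k + 1)))
    simp only [Walk.length_append, Walk.drop_length] at this
    omega
  · have := (G.deleteEdges {s(u, v)}).dist_le ((p.take (k + 1)).append q.reverse)
    simp only [Walk.length_append, Walk.take_length, Walk.length_reverse] at this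
    omega

lemma exists_isCycle_length_eq_dist_deleteEdges_add_one (huv : G.Adj u v)
    (hreach : (G.deleteEdges {s(u, v)}).Reachable u v) :
    ∃ (a : V) (c : G.Walk a a), c.IsCycle ∧ s(u, v) ∈ c.edges ∧
      c.length = (G.deleteEdges {s(u, v)}).dist u v + 1 := by
  obtain ⟨p, hp, hlen⟩ := hreach.symm.exists_path_of_dist
  have hpG : ∀ e ∈ p.edges, e ∈ G.edgeSet := fun e he ↦
    edgeSet_mono (G.deleteEdges_le _) (p.edges_subset_edgeSet he)
  refine ⟨u, .cons huv (p.transfer G hpG), ?_, by simp, ?_⟩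
  · rw [Walk.cons_isCycle_iff, Walk.edges_transfer]
    refine ⟨hp.transfer hpG, fun he ↦ ?_⟩
    simpa using p.edges_subset_edgeSet he
  · rw [Walk.length_cons, Walk.length_transfer, hlen, dist_comm]

end SimpleGraph

theorem edge_at_center_on_short_cycle_general {α : Type*} (G : SimpleGraph α)
    (hbridgeless : ∀ e : Sym2 α, ¬ G.IsBridge e)
    (u : α) (hecc : ∀ x : α, G.dist u x ≤ 2) :
    ∀ v : α, G.Adj u v →
      ∃ (a : α) (p : G.Walk a a), p.IsCycle ∧ s(u, v) ∈ p.edges ∧ p.length ≤ 5 := by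
  intro v huv
  have hreach : (G.deleteEdges {s(u, v)}).Reachable u v := not_not.mp (hbridgeless s(u, v))
  obtain ⟨a, c, hc, hmem, hlen⟩ :=
    SimpleGraph.exists_isCycle_length_eq_dist_deleteEdges_add_one huv hreach
  have hdist := SimpleGraph.dist_deleteEdges_le_of_forall_dist_le hecc hreach
  exact ⟨a, c, hc, hmem, by omega⟩

/-- Let `G` be a connected bridgeless finite simple graph and let `u` be a vertex of
eccentricity at most 2. Then every edge of `G` incident to `u` lies on a cycle of
length at most 5. -/
theorem edge_at_center_on_short_cycle {α : Type*} [Fintype α] (G : SimpleGraph α)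
    (hconn : G.Connected) (hbridgeless : ∀ e : Sym2 α, ¬ G.IsBridge e)
    (u : α) (hecc : ∀ x : α, G.dist u x ≤ 2) :
    ∀ v : α, G.Adj u v →
      ∃ (a : α) (p : G.Walk a a), p.IsCycle ∧ s(u, v) ∈ p.edges ∧ p.length ≤ 5 :=
  edge_at_center_on_short_cycle_general G hbridgeless u hecc
end
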